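/- The function (x, t) ↦ ln(1 + 1/x) / t is convex on the set {(x, t) ∈ ℝ × ℝ : x > 0 and t > 1}. -/
import Mathlib
open Real Set intervalIntegral

/-- Pointwise convexity inequality for `(y,t) ↦ ((y+u)*t)⁻¹`. -/
lemma aux_pointwise (u : ℝ) (hu : 0 ≤ u) {p q : ℝ × ℝ}
    (hp1 : 0 < p.1) (hp2 : 0 < p.2) (hq1 : 0 < q.1) (hq2 : 0 < q.2)
    {a b : ℝ} (ha : 0 ≤ a) (hb : 0 ≤ b) (hab : a + b = 1) :
    (((a • p + b • q).1 + u) * (a • p + b • q).2)⁻¹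
      ≤ a * ((p.1 + u) * p.2)⁻¹ + b * ((q.1 + u) * q.2)⁻¹ := by
  have hy1 : 0 < p.1 + u := by linarith
  have hy2 : 0 < q.1 + u := by linarith
  have hconc := strictConcaveOn_log_Ioi.concaveOn
  have hlogy : a • Real.log (p.1 + u) + b • Real.log (q.1 + u)
      ≤ Real.log (a • (p.1 + u) + b • (q.1 + u)) :=
    hconc.2 (mem_Ioi.2 hy1) (mem_Ioi.2 hy2) ha hb hab
  have hlogt : a • Real.log p.2 + b • Real.log q.2
      ≤ Real.log (a • p.2 + b • q.2) :=
    hconc.2 (mem_Ioi.2 hp2) (mem_Ioi.2 hq2) ha hb hab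
  have h1 : ((a • p + b • q).1 + u) * (a • p + b • q).2
      = (a • (p.1 + u) + b • (q.1 + u)) * (a • p.2 + b • q.2) := by
    simp only [Prod.fst_add, Prod.snd_add, Prod.smul_fst, Prod.smul_snd, smul_eq_mul]
    linear_combination (-u) * (a * p.2 + b * q.2) * hab
  have hD1 : 0 < a • (p.1 + u) + b • (q.1 + u) := by
    rcases eq_or_lt_of_le ha with h | h
    · simp only [← h, zero_smul, zero_add]; have : b = 1 := by linarith
      simpa [this] using hy2
    · rcases eq_or_lt_of_le hb with h' | h'
      · simp only [← h', zero_smul, add_zero]; have : a = 1 := by linarith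
        simpa [this] using hy1
      · positivity
  have hD2 : 0 < a • p.2 + b • q.2 := by
    rcases eq_or_lt_of_le ha with h | h
    · simp only [← h, zero_smul, zero_add]; have : b = 1 := by linarith
      simpa [this] using hq2
    · rcases eq_or_lt_of_le hb with h' | h'
      · simp only [← h', zero_smul, add_zero]; have : a = 1 := by linarith
        simpa [this] using hp2
      · positivity
  rw [h1]
  have hexp : ((a • (p.1 + u) + b • (q.1 + u)) * (a • p.2 + b • q.2))⁻¹
      = Real.exp (-(Real.log (a • (p.1 + u) + b • (q.1 + u))
          + Real.log (a • p.2 + b • q.2))) := by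
    rw [Real.exp_neg, Real.exp_add, Real.exp_log hD1, Real.exp_log hD2]
  rw [hexp]
  have step1 : Real.exp (-(Real.log (a • (p.1 + u) + b • (q.1 + u))
          + Real.log (a • p.2 + b • q.2)))
      ≤ Real.exp (a • (-(Real.log (p.1 + u) + Real.log p.2))
          + b • (-(Real.log (q.1 + u) + Real.log q.2))) := by
    apply Real.exp_le_exp.2
    simp only [smul_eq_mul] at *
    nlinarith [hlogy, hlogt]
  refine step1.trans ?_
  have step2 := convexOn_exp.2 (mem_univ (-(Real.log (p.1 + u) + Real.log p.2)))
    (mem_univ (-(Real.log (q.1 + u) + Real.log q.2))) ha hb hab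
  have e1 : Real.exp (-(Real.log (p.1 + u) + Real.log p.2)) = ((p.1 + u) * p.2)⁻¹ := by
    rw [Real.exp_neg, Real.exp_add, Real.exp_log hy1, Real.exp_log hp2]
  have e2 : Real.exp (-(Real.log (q.1 + u) + Real.log q.2)) = ((q.1 + u) * q.2)⁻¹ := by
    rw [Real.exp_neg, Real.exp_add, Real.exp_log hy2, Real.exp_log hq2]
  rw [e1, e2] at step2
  simpa [smul_eq_mul] using step2

/-- Integral representation. -/
lemma aux_integral {y t : ℝ} (hy : 0 < y) (ht : 0 < t) :
    ∫ u in (0:ℝ)..1, ((y + u) * t)⁻¹ = Real.log (1 + 1 / y) / t := by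
  have h1 : ∀ u : ℝ, ((y + u) * t)⁻¹ = t⁻¹ * (y + u)⁻¹ := by
    intro u; rw [mul_inv]; ring
  simp_rw [h1]
  rw [intervalIntegral.integral_const_mul]
  have h2 : ∫ u in (0:ℝ)..1, (y + u)⁻¹ = ∫ v in (y + 0)..(y + 1), v⁻¹ :=
    intervalIntegral.integral_comp_add_left (fun v => v⁻¹) y
  rw [h2, integral_inv]
  · rw [add_zero]
    have : (y + 1) / y = 1 + 1 / y := by field_simp
    rw [this]; ring
  · rw [add_zero]
    intro h
    rcases Set.mem_uIcc.1 h with ⟨h1', _⟩ | ⟨_, h2'⟩ <;> linarith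

lemma aux_cont {y t : ℝ} (hy : 0 < y) (ht : 0 < t) :
    ContinuousOn (fun u : ℝ => ((y + u) * t)⁻¹) (Set.uIcc (0:ℝ) 1) := by
  apply ContinuousOn.inv₀
  · fun_prop
  · intro u hu
    rw [Set.uIcc_of_le (by norm_num : (0:ℝ) ≤ 1)] at hu
    have : 0 < y + u := by linarith [hu.1]
    positivity

/-- The function `(x, t) ↦ ln(1 + 1/x) / t` is convex on
`{(x, t) : x > 0 ∧ t > 1}`. -/
theorem convexOn_log_one_add_inv_div :
    ConvexOn ℝ {p : ℝ × ℝ | 0 < p.1 ∧ 1 < p.2}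
      (fun p : ℝ × ℝ => Real.log (1 + 1 / p.1) / p.2) := by
  constructor
  · have : {p : ℝ × ℝ | 0 < p.1 ∧ 1 < p.2} = Set.Ioi (0:ℝ) ×ˢ Set.Ioi (1:ℝ) := by
      ext p; simp [Set.mem_prod]
    rw [this]
    exact (convex_Ioi 0).prod (convex_Ioi 1)
  · rintro p ⟨hp1, hp2⟩ q ⟨hq1, hq2⟩ a b ha hb hab
    have hp2' : (0:ℝ) < p.2 := lt_trans one_pos hp2
    have hq2' : (0:ℝ) < q.2 := lt_trans one_pos hq2
    set r := a • p + b • q with hr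
    have hr1 : 0 < r.1 := by
      rcases eq_or_lt_of_le ha with h | h
      · simp only [hr, Prod.fst_add, Prod.smul_fst, smul_eq_mul, ← h]
        have : b = 1 := by linarith
        simpa [this] using hq1
      · rcases eq_or_lt_of_le hb with h' | h'
        · simp only [hr, Prod.fst_add, Prod.smul_fst, smul_eq_mul, ← h']
          have : a = 1 := by linarith
          simpa [this] using hp1
        · simp only [hr, Prod.fst_add, Prod.smul_fst, smul_eq_mul]
          positivity
    have hr2 : 0 < r.2 := by
      simp only [hr, Prod.snd_add, Prod.smul_snd, smul_eq_mul]
      nlinarith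
    have key : ∫ u in (0:ℝ)..1, ((r.1 + u) * r.2)⁻¹
        ≤ a • (∫ u in (0:ℝ)..1, ((p.1 + u) * p.2)⁻¹)
          + b • (∫ u in (0:ℝ)..1, ((q.1 + u) * q.2)⁻¹) := by
      have hi1 := (aux_cont hr1 hr2).intervalIntegrable (μ := MeasureTheory.volume)
      have hip := (aux_cont hp1 hp2').intervalIntegrable (μ := MeasureTheory.volume)
      have hiq := (aux_cont hq1 hq2').intervalIntegrable (μ := MeasureTheory.volume)
      have hmono := intervalIntegral.integral_mono_on (by norm_num : (0:ℝ) ≤ 1)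
        hi1 ((hip.const_mul a).add (hiq.const_mul b)) (fun u hu => by
          exact aux_pointwise u hu.1 hp1 hp2' hq1 hq2' ha hb hab)
      refine hmono.trans_eq ?_
      calc ∫ u in (0:ℝ)..1, (a * ((p.1 + u) * p.2)⁻¹ + b * ((q.1 + u) * q.2)⁻¹)
          = (∫ u in (0:ℝ)..1, a • ((p.1 + u) * p.2)⁻¹)
            + (∫ u in (0:ℝ)..1, b • ((q.1 + u) * q.2)⁻¹) :=
            intervalIntegral.integral_add (hip.smul a) (hiq.smul b)
        _ = a • (∫ u in (0:ℝ)..1, ((p.1 + u) * p.2)⁻¹)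
            + b • (∫ u in (0:ℝ)..1, ((q.1 + u) * q.2)⁻¹) := by
            rw [intervalIntegral.integral_smul, intervalIntegral.integral_smul]

    show Real.log (1 + 1 / r.1) / r.2
        ≤ a • (Real.log (1 + 1 / p.1) / p.2) + b • (Real.log (1 + 1 / q.1) / q.2)
    rw [aux_integral hp1 hp2', aux_integral hq1 hq2', aux_integral hr1 hr2] at key
    exact key
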